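/- Let S be a tight odd set for a minimum-weight perfect matching problem, i.e., every minimum-weight perfect matching M satisfies |M ∩ δ(S)| = 1. Let M₁, M₂ be two minimum-weight perfect matchings and let C be a cycle in M₁ Δ M₂. Then the number of C-edges crossing S that belong to M₁ equals the number of C-edges crossing S that belong to M₂ (i.e., mis(C, S) = 0). -/
import Mathlib


/-- A perfect matching of `G`, given as a finite set of edges. -/
def IsPM {V : Type*} [Fintype V] [DecidableEq V] (G : SimpleGraph V) [DecidableRel G.Adj]
    (M : Finset (Sym2 V)) : Prop :=
  M ⊆ G.edgeFinset ∧ ∀ v : V, (M.filter fun e => v ∈ e).card = 1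

/-- The total weight of a set of edges. -/
def mweight {V : Type*} (w : Sym2 V → ℤ) (M : Finset (Sym2 V)) : ℤ := ∑ e ∈ M, w e

/-- A minimum-weight perfect matching. -/
def MinPM {V : Type*} [Fintype V] [DecidableEq V] (G : SimpleGraph V) [DecidableRel G.Adj]
    (w : Sym2 V → ℤ) (M : Finset (Sym2 V)) : Prop :=
  IsPM G M ∧ ∀ N, IsPM G N → mweight w M ≤ mweight w N

/-- An edge crosses `S` if exactly one of its endpoints lies in `S`. -/
def Crosses {V : Type*} (S : Finset V) (e : Sym2 V) : Prop :=
  ∃ u v : V, e = s(u, v) ∧ u ∈ S ∧ v ∉ S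

/-- Splitting a filtered card along a second finset. -/
lemma card_filter_split {α : Type*} [DecidableEq α] (M C : Finset α) (p : α → Prop)
    [DecidablePred p] :
    (M.filter p).card = ((M \ C).filter p).card + ((M ∩ C).filter p).card := by
  rw [← Finset.card_union_of_disjoint (Finset.disjoint_filter_filter
      (Finset.disjoint_of_subset_right Finset.inter_subset_right Finset.sdiff_disjoint)),
    ← Finset.filter_union, Finset.sdiff_union_inter]

/-- Splitting a weight sum along a second finset. -/
lemma mweight_split {V : Type*} [DecidableEq V] (w : Sym2 V → ℤ) (M C : Finset (Sym2 V)) :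
    mweight w M = mweight w (M \ C) + mweight w (M ∩ C) := by
  unfold mweight
  rw [← Finset.sum_union (Finset.disjoint_of_subset_right Finset.inter_subset_right
      Finset.sdiff_disjoint), Finset.sdiff_union_inter]

/-- Every vertex is incident to an even number of edges of a closed trail. -/
lemma cycle_even_incidence {V : Type*} [DecidableEq V] {G : SimpleGraph V} {u : V}
    {c : G.Walk u u} (hc : c.IsTrail) (v : V) :
    Even ((c.edges.toFinset.filter (fun e => v ∈ e)).card) := by
  have h := (hc.even_countP_edges_iff v).2 (by simp)
  have h2 : c.edges.toFinset.filter (fun e => v ∈ e)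
      = (c.edges.filter (fun e => v ∈ e)).toFinset := by
    simp [List.toFinset_filter]
  rw [h2, List.card_toFinset, List.Nodup.dedup (hc.edges_nodup.filter _),
    ← List.countP_eq_length_filter]
  exact h

/-- Swapping a matching along an alternating cycle yields a perfect matching. -/
lemma swap_isPM {V : Type*} [Fintype V] [DecidableEq V] (G : SimpleGraph V)
    [DecidableRel G.Adj] {M N : Finset (Sym2 V)} (hM : IsPM G M) (hN : IsPM G N)
    {u : V} {c : G.Walk u u} (hc : c.IsCycle)
    (hsub : ∀ e ∈ c.edges, e ∈ symmDiff M N) :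
    IsPM G ((M \ c.edges.toFinset) ∪ (c.edges.toFinset \ M)) := by
  set C : Finset (Sym2 V) := c.edges.toFinset with hCdef
  constructor
  · intro e he
    rcases Finset.mem_union.1 he with h | h
    · exact hM.1 (Finset.mem_sdiff.1 h).1
    · exact SimpleGraph.mem_edgeFinset.2
        (c.edges_subset_edgeSet (List.mem_toFinset.1 (Finset.mem_sdiff.1 h).1))
  · intro v
    have hdisj : Disjoint (M \ C) (C \ M) := disjoint_sdiff_sdiff
    rw [Finset.filter_union, Finset.card_union_of_disjoint
      (Finset.disjoint_filter_filter hdisj)]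
    have hsplitM := card_filter_split M C (fun e => v ∈ e)
    have hsplitC := card_filter_split C M (fun e => v ∈ e)
    have hMv := hM.2 v
    have hNv := hN.2 v
    have ha : ((M ∩ C).filter (fun e => v ∈ e)).card ≤ 1 := by
      rw [← hMv]
      exact Finset.card_le_card (Finset.filter_subset_filter _ Finset.inter_subset_left)
    have hb : ((C \ M).filter (fun e => v ∈ e)).card ≤ 1 := by
      rw [← hNv]
      refine Finset.card_le_card (Finset.filter_subset_filter _ ?_)
      intro e he
      rcases Finset.mem_sdiff.1 he with ⟨heC, heM⟩
      rcases Finset.mem_symmDiff.1 (hsub e (List.mem_toFinset.1 heC)) with ⟨h1, _⟩ | ⟨h1, _⟩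
      · exact absurd h1 heM
      · exact h1
    have heven := cycle_even_incidence hc.isTrail v
    rw [← hCdef] at heven
    rw [hsplitC] at heven
    have hci : (C ∩ M).filter (fun e => v ∈ e) = (M ∩ C).filter (fun e => v ∈ e) := by
      rw [Finset.inter_comm]
    rw [hci] at heven
    obtain ⟨k, hk⟩ := heven
    omega

/-- Weight identity for the swapped matching. -/
lemma swap_mweight {V : Type*} [DecidableEq V] (w : Sym2 V → ℤ) (M C : Finset (Sym2 V)) :
    mweight w ((M \ C) ∪ (C \ M)) + mweight w (M ∩ C)
      = mweight w M + mweight w (C \ M) := by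
  have h1 : mweight w ((M \ C) ∪ (C \ M)) = mweight w (M \ C) + mweight w (C \ M) := by
    unfold mweight
    rw [Finset.sum_union disjoint_sdiff_sdiff]
  rw [h1, mweight_split w M C]
  ring

/-- Let `S` be a tight odd set (every minimum-weight perfect matching has
exactly one edge in `δ(S)`) and let `C` be a cycle in the symmetric difference of two
minimum-weight perfect matchings `M₁, M₂`.  Then the number of `C`-edges crossing `S`
belonging to `M₁` equals the number belonging to `M₂`. -/
theorem tight_set_zero_mismatch {V : Type*} [Fintype V] [DecidableEq V]
    (G : SimpleGraph V) [DecidableRel G.Adj] (w : Sym2 V → ℤ)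
    (S : Finset V) (hodd : Odd S.card)
    (htight : ∀ M, MinPM G w M → {e : Sym2 V | e ∈ M ∧ Crosses S e}.ncard = 1)
    (M₁ M₂ : Finset (Sym2 V)) (h₁ : MinPM G w M₁) (h₂ : MinPM G w M₂)
    (u : V) (c : G.Walk u u) (hc : c.IsCycle)
    (hsub : ∀ e ∈ c.edges, e ∈ symmDiff M₁ M₂) :
    {e : Sym2 V | e ∈ c.edges ∧ e ∈ M₁ ∧ Crosses S e}.ncard =
      {e : Sym2 V | e ∈ c.edges ∧ e ∈ M₂ ∧ Crosses S e}.ncard := by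
  classical
  set C : Finset (Sym2 V) := c.edges.toFinset with hCdef
  have hsub' : ∀ e ∈ c.edges, e ∈ symmDiff M₂ M₁ := by
    intro e he; rw [symmDiff_comm]; exact hsub e he
  -- identities between differences and intersections
  have hd1 : C \ M₁ = C ∩ M₂ := by
    ext e
    simp only [Finset.mem_sdiff, Finset.mem_inter]
    constructor
    · rintro ⟨heC, heM⟩
      refine ⟨heC, ?_⟩
      rcases Finset.mem_symmDiff.1 (hsub e (List.mem_toFinset.1 heC)) with ⟨h, _⟩ | ⟨h, _⟩
      · exact absurd h heM
      · exact h
    · rintro ⟨heC, heM⟩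
      refine ⟨heC, ?_⟩
      rcases Finset.mem_symmDiff.1 (hsub e (List.mem_toFinset.1 heC)) with ⟨_, h⟩ | ⟨_, h⟩
      · exact absurd heM h
      · exact h
  have hd2 : C \ M₂ = C ∩ M₁ := by
    ext e
    simp only [Finset.mem_sdiff, Finset.mem_inter]
    constructor
    · rintro ⟨heC, heM⟩
      refine ⟨heC, ?_⟩
      rcases Finset.mem_symmDiff.1 (hsub e (List.mem_toFinset.1 heC)) with ⟨h, _⟩ | ⟨h, _⟩
      · exact h
      · exact absurd h heM
    · rintro ⟨heC, heM⟩
      refine ⟨heC, ?_⟩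
      rcases Finset.mem_symmDiff.1 (hsub e (List.mem_toFinset.1 heC)) with ⟨_, h⟩ | ⟨_, h⟩
      · exact h
      · exact absurd heM h
  -- swapped matchings are perfect matchings
  have hpm1 : IsPM G ((M₁ \ C) ∪ (C \ M₁)) := swap_isPM G h₁.1 h₂.1 hc hsub
  have hpm2 : IsPM G ((M₂ \ C) ∪ (C \ M₂)) := swap_isPM G h₂.1 h₁.1 hc hsub'
  -- weight comparisons
  have hw1 := h₁.2 _ hpm1
  have hw2 := h₂.2 _ hpm2
  have hsw1 := swap_mweight w M₁ C
  have hsw2 := swap_mweight w M₂ C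
  have hic : M₂ ∩ C = C ∩ M₂ := Finset.inter_comm _ _
  have hic' : M₁ ∩ C = C ∩ M₁ := Finset.inter_comm _ _
  rw [hic'] at hsw1
  rw [hic] at hsw2
  rw [hd1] at hsw1 hw1
  rw [hd2] at hsw2 hw2
  have heq : mweight w (C ∩ M₁) = mweight w (C ∩ M₂) := by omega
  -- the swapped matching M₁' is a minimum perfect matching
  have hmin1 : MinPM G w ((M₁ \ C) ∪ (C \ M₁)) := by
    refine ⟨hpm1, fun N hN => ?_⟩
    have hwN := h₁.2 N hN
    rw [hd1]
    omega
  -- convert ncard statements to filter cards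
  have hconv : ∀ M : Finset (Sym2 V),
      {e : Sym2 V | e ∈ M ∧ Crosses S e}.ncard = (M.filter (fun e => Crosses S e)).card := by
    intro M
    rw [← Set.ncard_coe_finset]
    congr 1
    ext e
    simp [Finset.mem_filter]
  have ht1 : (M₁.filter (fun e => Crosses S e)).card = 1 := by
    rw [← hconv]; exact htight M₁ h₁
  have ht1' : (((M₁ \ C) ∪ (C \ M₁)).filter (fun e => Crosses S e)).card = 1 := by
    rw [← hconv]; exact htight _ hmin1
  -- split the counts
  have hs1 := card_filter_split M₁ C (fun e => Crosses S e)
  rw [hs1] at ht1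
  rw [Finset.filter_union, Finset.card_union_of_disjoint
    (Finset.disjoint_filter_filter disjoint_sdiff_sdiff)] at ht1'
  -- conclude equal filtered counts
  rw [hic'] at ht1
  rw [hd1] at ht1'
  have hgoal : ((C ∩ M₁).filter (fun e => Crosses S e)).card
      = ((C ∩ M₂).filter (fun e => Crosses S e)).card := by omega
  -- rewrite the goal as filtered counts
  have hset1 : {e : Sym2 V | e ∈ c.edges ∧ e ∈ M₁ ∧ Crosses S e}
      = ↑((C ∩ M₁).filter (fun e => Crosses S e)) := by
    ext e
    simp only [Set.mem_setOf_eq, Finset.coe_filter, Finset.mem_inter, hCdef,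
      List.mem_toFinset, Set.mem_setOf_eq]
    tauto
  have hset2 : {e : Sym2 V | e ∈ c.edges ∧ e ∈ M₂ ∧ Crosses S e}
      = ↑((C ∩ M₂).filter (fun e => Crosses S e)) := by
    ext e
    simp only [Set.mem_setOf_eq, Finset.coe_filter, Finset.mem_inter, hCdef,
      List.mem_toFinset, Set.mem_setOf_eq]
    tauto
  rw [hset1, hset2, Set.ncard_coe_finset, Set.ncard_coe_finset, hgoal]
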